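/- Let A = [[s,1],[0,s^{-1}]] and B = [[s,0],[-y,s^{-1}]] in SL(2,C[s^{\pm1},y]). For m >= 1 define W_m = (BA^{-1})^m (B^{-1}A)^m with entries w_m^{ij}. Then deg w_m^{11} = deg w_m^{21} = 2m+1 and deg w_m^{12} = deg w_m^{22} = 2m; in particular deg(tr W_m) = 2m+1. -/

import Mathlib

noncomputable section

/-- The ring of Laurent polynomials in `s` and ordinary polynomials in `y`
over `ℂ`, i.e. `ℂ[s^{±1}, y]`. -/
abbrev R2 : Type := AddMonoidAlgebra ℂ (ℤ × ℕ)

/-- The variable `s`. -/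
def s : R2 := AddMonoidAlgebra.single (1, 0) 1
/-- The inverse variable `s⁻¹`. -/
def sInv : R2 := AddMonoidAlgebra.single (-1, 0) 1
/-- The variable `y`. -/
def y : R2 := AddMonoidAlgebra.single (0, 1) 1

/-- `A = [[s,1],[0,s⁻¹]]`. -/
def A : Matrix (Fin 2) (Fin 2) R2 := !![s, 1; 0, sInv]
/-- `B = [[s,0],[-y,s⁻¹]]`. -/
def B : Matrix (Fin 2) (Fin 2) R2 := !![s, 0; -y, sInv]


/-- The total degree of a Laurent polynomial in `s` and `y`. -/
def deg (f : R2) : WithBot ℤ := f.coeff.support.sup fun p => ((p.1 + (p.2 : ℤ)) : WithBot ℤ)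

/-- `W_m = (B A⁻¹)^m (B⁻¹ A)^m`. -/
def W (m : ℕ) : Matrix (Fin 2) (Fin 2) R2 := (B * A⁻¹) ^ m * (B⁻¹ * A) ^ m

/-! Put the total-degree grading on `ℂ[s^{±1}, y]`. For matrices whose entry degrees are bounded
by `E i j`, and for bounds that add up along products (`E i l + F l j = G i j`), taking in each
entry the homogeneous component of degree `E i j` is multiplicative. Column `0` of `W_m` has
degree at most `2m + 1` and column `1` at most `2m`, and these bounds are compatible with
`W_{m+1} = (B A⁻¹) W_m (B⁻¹ A)` when `B A⁻¹` is given the (non-sharp) bound `1` in every entry.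
The top components of the two outer factors are `[[0, -s], [0, y]]` and `[[0, 0], [y s, y]]`,
and both multiply `Λ = [[-s², -s], [s y, y]]` into `y • Λ`; so the top component of `W_m` is
`y^(2m-1) • Λ`, whose entries are all nonzero. For the trace, `deg w^{22} = 2m < 2m + 1`. -/

open AddMonoidAlgebra

section Graded

variable {R Γ : Type*} [CommRing R] [AddCommMonoid Γ] (D : Γ →+ ℤ)

def degBy (f : R[Γ]) : WithBot ℤ := f.supDegree fun a => (D a : WithBot ℤ)

local notation "π" => GradedRing.proj (gradeBy R D)

variable {D}

theorem coeff_proj_gradeBy (d : ℤ) (f : R[Γ]) (a : Γ) :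
    (π d f).coeff a = if D a = d then f.coeff a else 0 := by
  classical
  induction f using AddMonoidAlgebra.induction_linear with
  | zero => simp
  | add f g hf hg => simp only [map_add, coeff_add, Finsupp.add_apply, hf, hg]; split_ifs <;> simp
  | single m r =>
    rw [GradedRing.proj_apply, GradesBy.decompose_single, DirectSum.of_apply]
    by_cases h : D m = d
    · subst h
      rcases eq_or_ne m a with rfl | ha <;> simp [coeff_single, *]
    · rcases eq_or_ne m a with rfl | ha <;> simp [coeff_single, *]

theorem degBy_le_iff {f : R[Γ]} {d : ℤ} : degBy D f ≤ d ↔ ∀ a ∈ f.coeff.support, D a ≤ d := by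
  simp [degBy, supDegree, Finset.sup_le_iff]

theorem degBy_lt_iff {f : R[Γ]} {d : ℤ} : degBy D f < d ↔ ∀ a ∈ f.coeff.support, D a < d := by
  simp [degBy, supDegree, Finset.sup_lt_iff (WithBot.bot_lt_coe d)]

theorem proj_of_mem_gradeBy {f : R[Γ]} {d : ℤ} (h : f ∈ gradeBy R D d) : π d f = f :=
  DirectSum.decompose_of_mem_same _ h

theorem proj_eq_zero_of_mem_gradeBy {f : R[Γ]} {d e : ℤ} (h : f ∈ gradeBy R D e) (hne : e ≠ d) :
    π d f = 0 :=
  DirectSum.decompose_of_mem_ne _ h hne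

theorem proj_eq_zero_of_degBy_lt {f : R[Γ]} {d : ℤ} (h : degBy D f < d) : π d f = 0 := by
  ext a
  rw [coeff_proj_gradeBy, coeff_zero, Finsupp.coe_zero, Pi.zero_apply, ite_eq_right_iff]
  intro had
  by_contra ha
  exact (degBy_lt_iff.mp h a (Finsupp.mem_support_iff.mpr ha)).ne had

theorem degBy_sub_proj_lt {f : R[Γ]} {d : ℤ} (h : degBy D f ≤ d) : degBy D (f - π d f) < d := by
  refine degBy_lt_iff.mpr fun a ha => (degBy_le_iff.mp h a ?_).lt_of_ne fun had => ?_
  all_goals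
    rw [Finsupp.mem_support_iff, coeff_sub, Finsupp.sub_apply, coeff_proj_gradeBy] at ha
  · by_contra hf
    simp [Finsupp.notMem_support_iff.mp hf] at ha
  · simp [had] at ha

theorem degBy_le_of_mem_gradeBy {f : R[Γ]} {d e : ℤ} (h : f ∈ gradeBy R D e) (he : e ≤ d) :
    degBy D f ≤ d :=
  degBy_le_iff.mpr fun a ha => (h a ha).trans_le he

theorem degBy_add_le (f g : R[Γ]) : degBy D (f + g) ≤ max (degBy D f) (degBy D g) :=
  supDegree_add_le

theorem degBy_mul_le (f g : R[Γ]) : degBy D (f * g) ≤ degBy D f + degBy D g :=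
  supDegree_mul_le (by simp)

theorem proj_mul_of_degBy_le {f g : R[Γ]} {a b : ℤ} (hf : degBy D f ≤ a) (hg : degBy D g ≤ b) :
    π (a + b) (f * g) = π a f * π b g := by
  set f₀ := π a f
  set g₀ := π b g
  have hf₀ : f₀ ∈ gradeBy R D a := by simp [f₀, GradedRing.proj_apply]
  have hg₀ : g₀ ∈ gradeBy R D b := by simp [g₀, GradedRing.proj_apply]
  have hlow : degBy D (f₀ * (g - g₀) + (f - f₀) * g) < a + b := by
    refine (degBy_add_le _ _).trans_lt (max_lt ?_ ?_)
    · calc degBy D (f₀ * (g - g₀)) ≤ degBy D f₀ + degBy D (g - g₀) := degBy_mul_le _ _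
        _ ≤ a + degBy D (g - g₀) := by gcongr; exact degBy_le_of_mem_gradeBy hf₀ le_rfl
        _ < a + b := WithBot.add_lt_add_left WithBot.coe_ne_bot (degBy_sub_proj_lt hg)
    · calc degBy D ((f - f₀) * g) ≤ degBy D (f - f₀) + degBy D g := degBy_mul_le _ _
        _ ≤ degBy D (f - f₀) + b := by gcongr
        _ < a + b := WithBot.add_lt_add_right WithBot.coe_ne_bot (degBy_sub_proj_lt hf)
  rw [show f * g = f₀ * g₀ + (f₀ * (g - g₀) + (f - f₀) * g) by ring, map_add,
    proj_eq_zero_of_degBy_lt hlow, add_zero,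
    proj_of_mem_gradeBy (SetLike.GradedMul.mul_mem hf₀ hg₀)]

theorem degBy_eq_of_proj_ne_zero {f : R[Γ]} {d : ℤ} (h : degBy D f ≤ d) (h₀ : π d f ≠ 0) :
    degBy D f = d := by
  refine le_antisymm h ?_
  obtain ⟨a, ha⟩ : ∃ a, (π d f).coeff a ≠ 0 := by
    by_contra! h'
    exact h₀ (coeff_injective (Finsupp.ext h'))
  rw [coeff_proj_gradeBy] at ha
  split_ifs at ha with had
  · exact had ▸ Finset.le_sup (f := fun a => (D a : WithBot ℤ)) (Finsupp.mem_support_iff.mpr ha)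
  · exact absurd rfl ha

variable {ι κ μ : Type*}

variable (D) in
def Matrix.DegByLE (M : Matrix ι κ R[Γ]) (E : ι → κ → ℤ) : Prop :=
  ∀ i j, degBy D (M i j) ≤ E i j

variable (D) in
def Matrix.gradedProj (E : ι → κ → ℤ) (M : Matrix ι κ R[Γ]) : Matrix ι κ R[Γ] :=
  Matrix.of fun i j => π (E i j) (M i j)

variable [Fintype κ]

theorem Matrix.DegByLE.mul {M : Matrix ι κ R[Γ]} {N : Matrix κ μ R[Γ]} {E F G}
    (hM : M.DegByLE D E) (hN : N.DegByLE D F) (hEFG : ∀ i l j, E i l + F l j ≤ G i j) :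
    (M * N).DegByLE D G := fun i j =>
  supDegree_sum_le.trans <| Finset.sup_le fun l _ =>
    calc degBy D (M i l * N l j) ≤ degBy D (M i l) + degBy D (N l j) := degBy_mul_le _ _
      _ ≤ E i l + F l j := add_le_add (hM i l) (hN l j)
      _ ≤ G i j := mod_cast hEFG i l j

theorem Matrix.gradedProj_mul {M : Matrix ι κ R[Γ]} {N : Matrix κ μ R[Γ]} {E F G}
    (hM : M.DegByLE D E) (hN : N.DegByLE D F) (hEFG : ∀ i l j, E i l + F l j = G i j) :
    (M * N).gradedProj D G = M.gradedProj D E * N.gradedProj D F := by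
  refine Matrix.ext fun i j => ?_
  simp only [Matrix.gradedProj, Matrix.of_apply, Matrix.mul_apply, map_sum]
  refine Finset.sum_congr rfl fun l _ => ?_
  rw [← hEFG i l j, proj_mul_of_degBy_le (hM i l) (hN l j)]

end Graded

-- `deg f` is `degBy tot f` by definition.
def tot : ℤ × ℕ →+ ℤ :=
  AddMonoidHom.mk' (fun p => p.1 + p.2) fun p q => by push_cast [Prod.fst_add, Prod.snd_add]; ring

local notation "𝒢" => gradeBy ℂ tot
local notation "π" => GradedRing.proj 𝒢

theorem s_mem_gradeBy : s ∈ 𝒢 1 := single_mem_gradeBy _ _ _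
theorem sInv_mem_gradeBy : sInv ∈ 𝒢 (-1) := single_mem_gradeBy _ _ _
theorem y_mem_gradeBy : y ∈ 𝒢 1 := single_mem_gradeBy _ _ _
theorem one_mem_gradeBy : (1 : R2) ∈ 𝒢 0 := SetLike.GradedOne.one_mem

theorem s_ne_zero : s ≠ 0 := single_ne_zero.mpr one_ne_zero
theorem y_ne_zero : y ≠ 0 := single_ne_zero.mpr one_ne_zero

theorem s_mul_sInv : s * sInv = 1 := by
  rw [s, sInv, single_mul_single, one_def, mul_one]; congr 1

theorem sInv_mul_s : sInv * s = 1 := by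
  rw [sInv, s, single_mul_single, one_def, mul_one]; congr 1

theorem B_mul_inv_A : B * A⁻¹ = !![1, -s; -(y * sInv), y + 1] := by
  rw [Matrix.inv_eq_right_inv (B := !![sInv, -1; 0, s])]
  · simp [B, s_mul_sInv, sInv_mul_s]
  · simp [A, Matrix.one_fin_two, s_mul_sInv, mul_comm sInv s]

theorem inv_B_mul_A : B⁻¹ * A = !![1, sInv; y * s, y + 1] := by
  rw [Matrix.inv_eq_right_inv (B := !![sInv, 0; y, s])]
  · simp [A, s_mul_sInv, sInv_mul_s]
  · simp [B, Matrix.one_fin_two, s_mul_sInv, mul_comm y sInv, sInv_mul_s]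

theorem W_succ (m : ℕ) : W (m + 1) = B * A⁻¹ * W m * (B⁻¹ * A) := by
  rw [W, W, pow_succ', pow_succ]
  simp only [mul_assoc]

theorem y_mul_sInv_mem_gradeBy : y * sInv ∈ 𝒢 0 := by
  simpa using SetLike.GradedMul.mul_mem y_mem_gradeBy sInv_mem_gradeBy
theorem y_mul_s_mem_gradeBy : y * s ∈ 𝒢 2 := SetLike.GradedMul.mul_mem y_mem_gradeBy s_mem_gradeBy

theorem degBy_y_add_one_le : degBy tot (y + 1) ≤ 1 :=
  (degBy_add_le _ _).trans <|
    max_le (degBy_le_of_mem_gradeBy y_mem_gradeBy le_rfl)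
      (degBy_le_of_mem_gradeBy one_mem_gradeBy zero_le_one)

theorem proj_y_add_one : π 1 (y + 1) = y := by
  rw [map_add, proj_of_mem_gradeBy y_mem_gradeBy,
    proj_eq_zero_of_mem_gradeBy one_mem_gradeBy zero_ne_one, add_zero]

theorem degByLE_B_mul_inv_A : (B * A⁻¹).DegByLE tot (fun _ _ => 1) := by
  rw [B_mul_inv_A]
  intro i j
  fin_cases i <;> fin_cases j
  exacts [degBy_le_of_mem_gradeBy one_mem_gradeBy zero_le_one,
    degBy_le_of_mem_gradeBy (neg_mem s_mem_gradeBy) le_rfl,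
    degBy_le_of_mem_gradeBy (neg_mem y_mul_sInv_mem_gradeBy) zero_le_one, degBy_y_add_one_le]

theorem gradedProj_B_mul_inv_A : (B * A⁻¹).gradedProj tot (fun _ _ => 1) = !![0, -s; 0, y] := by
  rw [B_mul_inv_A]
  refine Matrix.ext fun i j => ?_
  fin_cases i <;> fin_cases j
  exacts [proj_eq_zero_of_mem_gradeBy one_mem_gradeBy zero_ne_one,
    proj_of_mem_gradeBy (neg_mem s_mem_gradeBy),
    proj_eq_zero_of_mem_gradeBy (neg_mem y_mul_sInv_mem_gradeBy) zero_ne_one, proj_y_add_one]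

theorem degByLE_inv_B_mul_A : (B⁻¹ * A).DegByLE tot !![1, 0; 2, 1] := by
  rw [inv_B_mul_A]
  intro i j
  fin_cases i <;> fin_cases j
  exacts [degBy_le_of_mem_gradeBy one_mem_gradeBy zero_le_one,
    degBy_le_of_mem_gradeBy sInv_mem_gradeBy (by norm_num : (-1 : ℤ) ≤ 0),
    degBy_le_of_mem_gradeBy y_mul_s_mem_gradeBy le_rfl, degBy_y_add_one_le]

theorem gradedProj_inv_B_mul_A : (B⁻¹ * A).gradedProj tot !![1, 0; 2, 1] = !![0, 0; y * s, y] := by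
  rw [inv_B_mul_A]
  refine Matrix.ext fun i j => ?_
  fin_cases i <;> fin_cases j
  exacts [proj_eq_zero_of_mem_gradeBy one_mem_gradeBy zero_ne_one,
    proj_eq_zero_of_mem_gradeBy sInv_mem_gradeBy (by norm_num : (-1 : ℤ) ≠ 0),
    proj_of_mem_gradeBy y_mul_s_mem_gradeBy, proj_y_add_one]

def colWeights (e : ℤ) : Fin 2 → Fin 2 → ℤ := fun _ j => ![e + 1, e] j

theorem degByLE_B_mul_inv_A_mul {M : Matrix (Fin 2) (Fin 2) R2} {e : ℤ}
    (hM : M.DegByLE tot (colWeights e)) :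
    (B * A⁻¹ * M).DegByLE tot fun i j => 1 + colWeights e i j :=
  degByLE_B_mul_inv_A.mul hM fun _ _ _ => le_rfl

theorem one_add_colWeights_add (e : ℤ) (i l j : Fin 2) :
    1 + colWeights e i l + !![1, 0; 2, 1] l j = colWeights (e + 2) i j := by
  fin_cases l <;> fin_cases j <;> simp [colWeights] <;> ring

theorem degByLE_conj {M : Matrix (Fin 2) (Fin 2) R2} {e : ℤ} (hM : M.DegByLE tot (colWeights e)) :
    (B * A⁻¹ * M * (B⁻¹ * A)).DegByLE tot (colWeights (e + 2)) :=
  (degByLE_B_mul_inv_A_mul hM).mul degByLE_inv_B_mul_A fun i l j =>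
    (one_add_colWeights_add e i l j).le

theorem gradedProj_conj {M : Matrix (Fin 2) (Fin 2) R2} {e : ℤ}
    (hM : M.DegByLE tot (colWeights e)) :
    (B * A⁻¹ * M * (B⁻¹ * A)).gradedProj tot (colWeights (e + 2)) =
      !![0, -s; 0, y] * M.gradedProj tot (colWeights e) * !![0, 0; y * s, y] := by
  rw [Matrix.gradedProj_mul (degByLE_B_mul_inv_A_mul hM) degByLE_inv_B_mul_A
      (one_add_colWeights_add e), Matrix.gradedProj_mul degByLE_B_mul_inv_A hM fun _ _ _ => rfl,
    gradedProj_B_mul_inv_A, gradedProj_inv_B_mul_A]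

def Λ : Matrix (Fin 2) (Fin 2) R2 := !![-(s ^ 2), -s; s * y, y]

theorem mul_Λ : !![0, -s; 0, y] * Λ = y • Λ := by
  simp only [Λ, Matrix.mul_fin_two, Matrix.smul_of, Matrix.smul_cons, Matrix.smul_empty,
    smul_eq_mul]
  ring_nf

theorem Λ_mul : Λ * !![0, 0; y * s, y] = y • Λ := by
  simp only [Λ, Matrix.mul_fin_two, Matrix.smul_of, Matrix.smul_cons, Matrix.smul_empty,
    smul_eq_mul]
  ring_nf

theorem Λ_ne_zero (i j : Fin 2) : Λ i j ≠ 0 := by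
  fin_cases i <;> fin_cases j <;> simp [Λ, s_ne_zero, y_ne_zero]

theorem two_mul_natCast_succ (m : ℕ) : 2 * ((m + 1 : ℕ) : ℤ) = 2 * m + 2 := by
  push_cast; ring

theorem degByLE_W (m : ℕ) : (W m).DegByLE tot (colWeights (2 * m)) := by
  induction m with
  | zero =>
    intro i j
    fin_cases i <;> fin_cases j <;> simp only [W, pow_zero, mul_one]
    exacts [degBy_le_of_mem_gradeBy one_mem_gradeBy zero_le_one,
      degBy_le_of_mem_gradeBy (zero_mem _) le_rfl, degBy_le_of_mem_gradeBy (zero_mem _) zero_le_one,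
      degBy_le_of_mem_gradeBy one_mem_gradeBy le_rfl]
  | succ n ih =>
    rw [W_succ, two_mul_natCast_succ]
    exact degByLE_conj ih

theorem gradedProj_W_zero : (W 0).gradedProj tot (colWeights 0) = !![0, 0; 0, 1] := by
  rw [W, pow_zero, pow_zero, mul_one]
  refine Matrix.ext fun i j => ?_
  fin_cases i <;> fin_cases j
  exacts [proj_eq_zero_of_mem_gradeBy one_mem_gradeBy zero_ne_one, (π 0).map_zero, (π 1).map_zero,
    proj_of_mem_gradeBy one_mem_gradeBy]

theorem gradedProj_W_one : (W 1).gradedProj tot (colWeights 2) = y • Λ := by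
  have h := gradedProj_conj (degByLE_W 0)
  rw [Nat.cast_zero, mul_zero, zero_add, gradedProj_W_zero, ← W_succ] at h
  rw [h]
  simp only [Λ, Matrix.mul_fin_two, Matrix.smul_of, Matrix.smul_cons, Matrix.smul_empty,
    smul_eq_mul]
  ring_nf

theorem gradedProj_W {m : ℕ} (hm : 1 ≤ m) :
    (W m).gradedProj tot (colWeights (2 * m)) = y ^ (2 * m - 1) • Λ := by
  induction m, hm using Nat.le_induction with
  | base => rw [Nat.cast_one, mul_one, gradedProj_W_one, pow_one]
  | succ m hm ih =>
    rw [W_succ, two_mul_natCast_succ, gradedProj_conj (degByLE_W m), ih, Matrix.mul_smul,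
      Matrix.smul_mul, mul_Λ, Matrix.smul_mul, Λ_mul, smul_smul, smul_smul, ← pow_succ, ← pow_succ]
    congr 2
    omega

/-- Degrees of the entries of `W_m = (B A⁻¹)^m (B⁻¹ A)^m`:
`deg w^{11} = deg w^{21} = 2m + 1`, `deg w^{12} = deg w^{22} = 2m`;
in particular `deg(tr W_m) = 2m + 1`. -/
theorem stmt_5 (m : ℕ) (hm : 1 ≤ m) :
    deg ((W m) 0 0) = (2 * (m : ℤ) + 1 : ℤ) ∧
    deg ((W m) 1 0) = (2 * (m : ℤ) + 1 : ℤ) ∧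
    deg ((W m) 0 1) = (2 * (m : ℤ) : ℤ) ∧
    deg ((W m) 1 1) = (2 * (m : ℤ) : ℤ) ∧
    deg ((W m).trace) = (2 * (m : ℤ) + 1 : ℤ) := by
  have hdeg := degByLE_W m
  have hproj : ∀ i j, π (colWeights (2 * m) i j) (W m i j) ≠ 0 := fun i j => by
    change (W m).gradedProj tot (colWeights (2 * m)) i j ≠ 0
    rw [gradedProj_W hm, Matrix.smul_apply, smul_eq_mul]
    exact mul_ne_zero (pow_ne_zero _ y_ne_zero) (Λ_ne_zero i j)
  have hentry : ∀ i j, deg (W m i j) = colWeights (2 * m) i j := fun i j =>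
    degBy_eq_of_proj_ne_zero (hdeg i j) (hproj i j)
  refine ⟨hentry 0 0, hentry 1 0, hentry 0 1, hentry 1 1, ?_⟩
  have h00 : degBy tot (W m 0 0) ≤ (2 * m + 1 : ℤ) := hdeg 0 0
  have h11 : degBy tot (W m 1 1) < (2 * m + 1 : ℤ) :=
    (hdeg 1 1).trans_lt (WithBot.coe_lt_coe.mpr (lt_add_one _))
  rw [Matrix.trace_fin_two]
  refine degBy_eq_of_proj_ne_zero ((degBy_add_le _ _).trans (max_le h00 h11.le)) ?_
  rw [map_add, proj_eq_zero_of_degBy_lt h11, add_zero]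
  exact hproj 0 0
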